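/- Consider a population protocol with state set Q = {r^ω, b^ω, r, b} and transition rules: (r^ω,r^ω)→(r,b), (r^ω,b^ω)→(b,b), (b^ω,r^ω)→(b,b), (r^ω,r)→(r,r^ω), (r,r^ω)→(r^ω,r), (b^ω,b)→(b,b^ω), (b,b^ω)→(b^ω,b), (r^ω,b)→(r,b^ω), (b,r^ω)→(b^ω,r), (b^ω,r)→(b,r^ω), (r,b^ω)→(r^ω,b), and all other pairs map to themselves. Then in any configuration reachable from the all-r^ω configuration, the equation #r = #b + 2·#b^ω holds, where #s denotes the number of agents in state s. -/

import Mathlib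

/-!
Give the states the weights `r ↦ 1`, `b ↦ -1`, `b^ω ↦ -2`, `r^ω ↦ 0`. Every rule preserves the
total weight of the two agents it touches, so the total weight of a configuration is invariant
under steps; it is `0` initially, and it equals `#r - #b - 2·#b^ω`.
-/

/-- States of the four-state protocol: r^ω, b^ω, r, b. -/
inductive St : Type
  | rw | bw | r | b
deriving DecidableEq

/-- Deterministic transition function of the protocol. -/
def delta : St → St → St × St
  | .rw, .rw => (.r, .b)
  | .rw, .bw => (.b, .b)
  | .bw, .rw => (.b, .b)
  | .rw, .r  => (.r, .rw)
  | .r,  .rw => (.rw, .r)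
  | .bw, .b  => (.b, .bw)
  | .b,  .bw => (.bw, .b)
  | .rw, .b  => (.r, .bw)
  | .b,  .rw => (.bw, .r)
  | .bw, .r  => (.b, .rw)
  | .r,  .bw => (.rw, .b)
  | p, q     => (p, q)

/-- One step: apply the rule to an ordered pair of distinct agents. -/
def Step {n : ℕ} (C C' : Fin n → St) : Prop :=
  ∃ i j : Fin n, i ≠ j ∧
    C' = Function.update (Function.update C i (delta (C i) (C j)).1) j
          (delta (C i) (C j)).2

/-- Number of agents in state `s`. -/
def cnt {n : ℕ} (C : Fin n → St) (s : St) : ℕ :=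
  (Finset.univ.filter fun a => C a = s).card

open Finset

lemma Fintype.sum_comp_update {ι α M : Type*} [Fintype ι] [DecidableEq ι] [AddCommGroup M]
    (w : α → M) (f : ι → α) (i : ι) (x : α) :
    ∑ a, w (Function.update f i x a) = ∑ a, w (f a) + (w x - w (f i)) := by
  have h := sum_update_of_mem (mem_univ i) (w ∘ f) (w x)
  rw [← Function.comp_update] at h
  simp only [Function.comp_apply] at h
  rw [h, sum_eq_add_sum_sdiff_singleton_of_mem (mem_univ i) (fun a => w (f a))]
  abel

namespace St

def weight : St → ℤ
  | .r => 1
  | .b => -1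
  | .bw => -2
  | .rw => 0

lemma weight_eq_indicators (s : St) : weight s =
    (if s = .r then 1 else 0) - (if s = .b then 1 else 0) - 2 * (if s = .bw then 1 else 0) := by
  cases s <;> rfl

lemma weight_delta (p q : St) :
    weight (delta p q).1 + weight (delta p q).2 = weight p + weight q := by
  cases p <;> cases q <;> rfl

end St

lemma sum_weight_eq_cnt {n : ℕ} (C : Fin n → St) :
    ∑ a, (C a).weight = (cnt C .r : ℤ) - cnt C .b - 2 * cnt C .bw := by
  simp only [St.weight_eq_indicators, sum_sub_distrib, ← mul_sum, sum_boole, cnt]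

lemma Step.sum_weight_eq {n : ℕ} {C C' : Fin n → St} (h : Step C C') :
    ∑ a, (C' a).weight = ∑ a, (C a).weight := by
  obtain ⟨i, j, hij, rfl⟩ := h
  rw [Fintype.sum_comp_update, Fintype.sum_comp_update, Function.update_of_ne hij.symm]
  linarith [St.weight_delta (C i) (C j)]

lemma sum_weight_eq_of_reflTransGen {n : ℕ} {C C' : Fin n → St}
    (h : Relation.ReflTransGen Step C C') : ∑ a, (C' a).weight = ∑ a, (C a).weight := by
  induction h with
  | refl => rfl
  | tail _ hstep ih => rw [hstep.sum_weight_eq, ih]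

theorem stmt0 (n : ℕ) (C : Fin n → St)
    (h : Relation.ReflTransGen Step (fun _ => St.rw) C) :
    cnt C .r = cnt C .b + 2 * cnt C .bw := by
  have hsum : (cnt C .r : ℤ) - cnt C .b - 2 * cnt C .bw = 0 := by
    rw [← sum_weight_eq_cnt, sum_weight_eq_of_reflTransGen h]
    simp [St.weight]
  omega
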